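/- Let x* ∈ ℝ^n be k-sparse, e ∈ ℝ^m, and b = Ax* + e. Suppose A satisfies the RIP of order 2k with constant δ_{2k}. Let C > 1, set D = (C − √C)/(√C + 1)², and let η > 0 satisfy δ_{2k} < 1 − 1/(2Dη). Let x be a least-squares solution on a support I with |I| ≤ k, assume f(x) ≥ (C/2)‖e‖², and set z = x − η Aᵀ(Ax − b), MD = supp(x*)\I, FA = I\supp(x*). Then ‖z_{MD}‖² − ‖x_{FA}‖² ≥ c f(x), where c = 2((√C + 1)²/C)(2ηD − 1/(1−δ_{2k})) > 0. -/
import Mathlib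
open Finset Matrix

noncomputable def nrm {d : ℕ} (x : Fin d → ℝ) : ℝ := Real.sqrt (∑ i, (x i)^2)
noncomputable def supp {d : ℕ} (x : Fin d → ℝ) : Finset (Fin d) := Finset.univ.filter (fun i => x i ≠ 0)
def restr {d : ℕ} (x : Fin d → ℝ) (I : Finset (Fin d)) : Fin d → ℝ := fun i => if i ∈ I then x i else 0
noncomputable def dotp {d : ℕ} (x y : Fin d → ℝ) : ℝ := ∑ i, x i * y i

def RIP {m n : ℕ} (A : Matrix (Fin m) (Fin n) ℝ) (s : ℕ) (δ : ℝ) : Prop :=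
  0 ≤ δ ∧ δ < 1 ∧ ∀ x : Fin n → ℝ, (supp x).card ≤ s →
    (1 - δ) * (nrm x)^2 ≤ (nrm (A.mulVec x))^2 ∧ (nrm (A.mulVec x))^2 ≤ (1 + δ) * (nrm x)^2

def lsSol {m n : ℕ} (A : Matrix (Fin m) (Fin n) ℝ) (b : Fin m → ℝ) (I : Finset (Fin n)) (x : Fin n → ℝ) : Prop :=
  supp x ⊆ I ∧ ∀ i ∈ I, Aᵀ.mulVec (A.mulVec x - b) i = 0

noncomputable def obj {m n : ℕ} (A : Matrix (Fin m) (Fin n) ℝ) (b : Fin m → ℝ) (x : Fin n → ℝ) : ℝ :=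
  (1/2) * (nrm (A.mulVec x - b))^2

lemma nrm_sq {d : ℕ} (v : Fin d → ℝ) : nrm v ^ 2 = ∑ i, (v i)^2 :=
  Real.sq_sqrt (Finset.sum_nonneg fun _ _ => sq_nonneg _)

lemma nrm_nonneg' {d : ℕ} (v : Fin d → ℝ) : 0 ≤ nrm v := Real.sqrt_nonneg _

lemma restr_sq {d : ℕ} (v : Fin d → ℝ) (I : Finset (Fin d)) :
    nrm (restr v I) ^ 2 = ∑ i ∈ I, (v i)^2 := by
  rw [nrm_sq]
  rw [show (∑ i, (restr v I i)^2) = ∑ i, (if i ∈ I then (v i)^2 else 0) from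
    Finset.sum_congr rfl (fun i _ => by by_cases h : i ∈ I <;> simp [restr, h])]
  rw [Finset.sum_ite_mem, Finset.univ_inter]

lemma adjoint_dot {m n : ℕ} (A : Matrix (Fin m) (Fin n) ℝ) (r : Fin m → ℝ) (w : Fin n → ℝ) :
    dotp (Aᵀ.mulVec r) w = dotp r (A.mulVec w) := by
  simp only [dotp, mulVec, dotProduct, transpose_apply, Finset.sum_mul, Finset.mul_sum]
  rw [Finset.sum_comm]
  exact Finset.sum_congr rfl fun i _ => Finset.sum_congr rfl fun j _ => by ring

lemma sq_le_imp (a b : ℝ) (hb : 0 ≤ b) (h : a^2 ≤ b^2) : a ≤ b := by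
  calc a ≤ |a| := le_abs_self a
    _ = Real.sqrt (a^2) := (Real.sqrt_sq_eq_abs a).symm
    _ ≤ Real.sqrt (b^2) := Real.sqrt_le_sqrt h
    _ = b := by rw [Real.sqrt_sq hb]

lemma am_gm_aux (η P G T : ℝ) (hη : 0 ≤ η) (hG : 0 ≤ G) (hT : 0 ≤ T)
    (hPle : P ≤ Real.sqrt G * Real.sqrt T) : 2*η*P ≤ η^2*G + T := by
  nlinarith [sq_nonneg (η*Real.sqrt G - Real.sqrt T), Real.sq_sqrt hG, Real.sq_sqrt hT,
    Real.sqrt_nonneg G, Real.sqrt_nonneg T]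

lemma sq_mono_aux (a b : ℝ) (ha : 0 ≤ a) (hab : a ≤ b) : a^2 ≤ b^2 := by nlinarith

lemma mem_supp' {d : ℕ} (v : Fin d → ℝ) (i : Fin d) : i ∈ supp v ↔ v i ≠ 0 := by
  simp [supp]

theorem stmt10 {m n k : ℕ} (A : Matrix (Fin m) (Fin n) ℝ) (xstar : Fin n → ℝ)
    (hsp : (supp xstar).card ≤ k) (e b : Fin m → ℝ) (hb : b = A.mulVec xstar + e)
    (δ : ℝ) (hRIP : RIP A (2*k) δ)
    (C D : ℝ) (hC : 1 < C) (hD : D = (C - Real.sqrt C)/(Real.sqrt C + 1)^2)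
    (η : ℝ) (hη : 0 < η) (hδη : δ < 1 - 1/(2*D*η))
    (x : Fin n → ℝ) (I : Finset (Fin n)) (hI : I.card ≤ k) (hx : lsSol A b I x)
    (hf : (C/2) * (nrm e)^2 ≤ obj A b x)
    (z : Fin n → ℝ) (hz : z = fun i => x i - η * Aᵀ.mulVec (A.mulVec x - b) i)
    (MD FA : Finset (Fin n)) (hMD : MD = supp xstar \ I) (hFA : FA = I \ supp xstar)
    (c : ℝ) (hc : c = 2*((Real.sqrt C + 1)^2/C)*(2*η*D - 1/(1-δ))) :
    0 < c ∧ c * obj A b x ≤ (nrm (restr z MD))^2 - (nrm (restr x FA))^2 := by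
  obtain ⟨hδ0, hδ1, hrip⟩ := hRIP
  obtain ⟨hsupx, hls⟩ := hx
  have hC0 : (0:ℝ) < C := by linarith
  set σ := Real.sqrt C with hσ
  have hσ1 : 1 < σ := by
    rw [hσ]; exact (Real.lt_sqrt zero_le_one).2 (by nlinarith)
  have hσsq : σ^2 = C := Real.sq_sqrt hC0.le
  have h1δ : (0:ℝ) < 1 - δ := by linarith
  have hD0 : 0 < D := by
    rw [hD]; apply div_pos; nlinarith; positivity
  -- c > 0
  have h2Dη : (0:ℝ) < 2*D*η := by positivity
  have hinv : 1/(2*D*η) < 1 - δ := by linarith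
  have h1 : (1:ℝ) < (1-δ)*(2*D*η) := (div_lt_iff₀ h2Dη).1 hinv
  have hcd : 1/(1-δ) < 2*η*D := by rw [div_lt_iff₀ h1δ]; nlinarith
  have hc0 : 0 < c := by
    rw [hc]; apply mul_pos; positivity; linarith
  refine ⟨hc0, ?_⟩
  -- setup
  set r := A.mulVec x - b with hr
  set g := Aᵀ.mulVec r with hg
  set w := fun i => x i - xstar i with hw
  clear_value r g w
  have hxI : ∀ i, i ∉ I → x i = 0 := by
    intro i hi; by_contra h; exact hi (hsupx ((mem_supp' x i).2 h))
  have hgI : ∀ i ∈ I, g i = 0 := hls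
  have hAw : A.mulVec w = fun j => r j + e j := by
    funext j
    have h1 : A.mulVec w j = A.mulVec x j - A.mulVec xstar j := by
      simp [hw, mulVec, dotProduct, mul_sub, Finset.sum_sub_distrib]
    rw [h1]
    have hrj : r j = A.mulVec x j - b j := by rw [hr]; rfl
    rw [hrj, hb]; simp; ring
  set s := nrm r with hs
  set ε := nrm e with hε
  clear_value s ε
  have hs0 : 0 ≤ s := by rw [hs]; exact nrm_nonneg' r
  have hε0 : 0 ≤ ε := by rw [hε]; exact nrm_nonneg' e
  have hs2 : s^2 = ∑ j, (r j)^2 := by rw [hs]; exact nrm_sq r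
  have hε2 : ε^2 = ∑ j, (e j)^2 := by rw [hε]; exact nrm_sq e
  have hσ0 : (0:ℝ) < σ := lt_trans one_pos hσ1
  have hobj : obj A b x = 1/2 * s^2 := by
    simp only [obj, hs, hr]
  -- √C ε ≤ s
  have hfs : C * ε^2 ≤ s^2 := by
    rw [hobj] at hf; linarith
  have hσε : σ * ε ≤ s := by
    apply sq_le_imp _ _ hs0
    rw [mul_pow, hσsq]; exact hfs
  -- Cauchy-Schwarz for r, e
  have hcs_re : (dotp r e)^2 ≤ s^2 * ε^2 := by
    rw [hs2, hε2]; exact Finset.sum_mul_sq_le_sq_mul_sq _ _ _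
  have hre_ub : dotp r e ≤ s*ε := by
    apply sq_le_imp _ _ (mul_nonneg hs0 hε0); rw [mul_pow]; exact hcs_re
  have hre_lb : -(s*ε) ≤ dotp r e := by
    have := sq_le_imp (-(dotp r e)) (s*ε) (mul_nonneg hs0 hε0) (by rw [mul_pow, neg_pow]; simpa using hcs_re)
    linarith
  set P := s^2 + dotp r e with hP
  clear_value P
  -- dotp g w = P
  have hgwP : dotp g w = P := by
    rw [hg, adjoint_dot, hAw, hP, hs2]
    simp only [dotp, mul_add, Finset.sum_add_distrib]
    congr 1
    exact Finset.sum_congr rfl fun j _ => by ring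
  -- dotp g w over MD
  have hMDnI : ∀ i ∈ MD, i ∉ I := by
    intro i hi; exact (Finset.mem_sdiff.1 (hMD ▸ hi)).2
  have hMDzero : ∀ i, i ∉ MD → g i * w i = 0 := by
    intro i hi
    by_cases hiI : i ∈ I
    · rw [hgI i hiI]; ring
    · have hx0 : x i = 0 := hxI i hiI
      have hxs : xstar i = 0 := by
        by_contra h
        exact hi (by rw [hMD]; exact Finset.mem_sdiff.2 ⟨(mem_supp' xstar i).2 h, hiI⟩)
      simp [hw, hx0, hxs]
  have hgwMD : dotp g w = -∑ i ∈ MD, g i * xstar i := by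
    have h1 : dotp g w = ∑ i ∈ MD, g i * w i :=
      (Finset.sum_subset (Finset.subset_univ MD) (fun i _ hi => hMDzero i hi)).symm
    rw [h1, ← Finset.sum_neg_distrib]
    apply Finset.sum_congr rfl
    intro i hi
    have hx0 : x i = 0 := hxI i (hMDnI i hi)
    simp [hw, hx0]
  set G := ∑ i ∈ MD, (g i)^2 with hG
  set T := ∑ i ∈ MD, (xstar i)^2 with hT
  clear_value G T
  have hG0 : 0 ≤ G := by rw [hG]; exact Finset.sum_nonneg fun _ _ => sq_nonneg _
  have hT0 : 0 ≤ T := by rw [hT]; exact Finset.sum_nonneg fun _ _ => sq_nonneg _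
  have hPsq : P^2 ≤ G*T := by
    have hcs := Finset.sum_mul_sq_le_sq_mul_sq MD g xstar
    have hPe : P = -∑ i ∈ MD, g i * xstar i := by rw [← hgwP, hgwMD]
    calc P^2 = (∑ i ∈ MD, g i * xstar i)^2 := by rw [hPe]; ring
      _ ≤ G*T := by rw [hG, hT]; exact hcs
  have hPle : P ≤ Real.sqrt G * Real.sqrt T := by
    calc P ≤ |P| := le_abs_self P
      _ = Real.sqrt (P^2) := (Real.sqrt_sq_eq_abs P).symm
      _ ≤ Real.sqrt (G*T) := Real.sqrt_le_sqrt hPsq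
      _ = Real.sqrt G * Real.sqrt T := Real.sqrt_mul hG0 T
  have hAM : 2*η*P ≤ η^2*G + T := am_gm_aux η P G T hη.le hG0 hT0 hPle
  -- T + U ≤ W
  set U := ∑ i ∈ FA, (x i)^2 with hU
  set W := ∑ i, (w i)^2 with hW
  clear_value U W
  have hdisj : Disjoint MD FA := by
    rw [Finset.disjoint_left]
    intro a ha hb
    exact (Finset.mem_sdiff.1 (hMD ▸ ha)).2 (Finset.mem_sdiff.1 (hFA ▸ hb)).1
  have hTU : T + U ≤ W := by
    have h1 : T = ∑ i ∈ MD, (w i)^2 := by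
      rw [hT]; apply Finset.sum_congr rfl; intro i hi
      have hx0 : x i = 0 := hxI i (hMDnI i hi)
      simp [hw, hx0]
    have h2 : U = ∑ i ∈ FA, (w i)^2 := by
      rw [hU]; apply Finset.sum_congr rfl; intro i hi
      have hxs : xstar i = 0 := by
        by_contra h
        exact (Finset.mem_sdiff.1 (hFA ▸ hi)).2 ((mem_supp' xstar i).2 h)
      simp [hw, hxs]
    rw [h1, h2, ← Finset.sum_union hdisj, hW]
    exact Finset.sum_le_sum_of_subset_of_nonneg (Finset.subset_univ _) (fun i _ _ => sq_nonneg _)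
  -- RIP bound
  have hsuppw : supp w ⊆ I ∪ supp xstar := by
    intro i hi
    rw [mem_supp'] at hi
    by_cases h : x i = 0
    · refine Finset.mem_union_right _ ((mem_supp' _ _).2 ?_)
      intro h2; exact hi (by simp [hw, h, h2])
    · exact Finset.mem_union_left _ (hsupx ((mem_supp' x i).2 h))
  have hcard : (supp w).card ≤ 2*k := by
    calc (supp w).card ≤ (I ∪ supp xstar).card := Finset.card_le_card hsuppw
      _ ≤ I.card + (supp xstar).card := Finset.card_union_le _ _
      _ ≤ 2*k := by omega
  have hripw := (hrip w hcard).1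
  have hAw2 : (nrm (A.mulVec w))^2 ≤ (s+ε)^2 := by
    rw [nrm_sq, hAw]
    have hexp : ∑ j, (r j + e j)^2 = s^2 + 2*(dotp r e) + ε^2 := by
      rw [hs2, hε2]
      simp only [dotp, Finset.mul_sum]
      rw [← Finset.sum_add_distrib, ← Finset.sum_add_distrib]
      apply Finset.sum_congr rfl; intro j _; ring
    calc ∑ j, (r j + e j)^2 = s^2 + 2*(dotp r e) + ε^2 := hexp
      _ ≤ (s+ε)^2 := by
          have hxp : (s+ε)^2 = s^2 + 2*(s*ε) + ε^2 := by ring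
          linarith [hre_ub]
  have hWb : (1-δ)*W ≤ (s+ε)^2 := by
    rw [nrm_sq w, ← hW] at hripw
    exact le_trans hripw hAw2
  -- LHS/RHS of goal
  have hzMD : (nrm (restr z MD))^2 = η^2 * G := by
    rw [restr_sq, hG, Finset.mul_sum]
    apply Finset.sum_congr rfl; intro i hi
    have hx0 : x i = 0 := hxI i (hMDnI i hi)
    rw [hz]; simp only []; rw [hx0]; ring
  have hxFA : (nrm (restr x FA))^2 = U := by rw [restr_sq, hU]
  rw [hobj, hzMD, hxFA]
  -- final arithmetic
  have hεs : ε ≤ s/σ := by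
    rw [le_div_iff₀ hσ0]; linarith [hσε]
  have hWub : W ≤ (s+ε)^2/(1-δ) := by
    rw [le_div_iff₀ h1δ]; linarith [hWb]
  have hsq_ub : (s+ε)^2 ≤ (s + s/σ)^2 :=
    sq_mono_aux _ _ (by positivity) (by linarith)
  have hWub2 : W ≤ (s + s/σ)^2/(1-δ) :=
    le_trans hWub ((div_le_div_iff_of_pos_right h1δ).2 hsq_ub)
  have hP_lb : s^2 - s*(s/σ) ≤ P := by
    have h1 : s*ε ≤ s*(s/σ) := mul_le_mul_of_nonneg_left hεs hs0
    rw [hP]; linarith [hre_lb]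
  have h2ηP : 2*η*(s^2 - s*(s/σ)) ≤ 2*η*P := by
    have := mul_le_mul_of_nonneg_left hP_lb (by positivity : (0:ℝ) ≤ 2*η)
    linarith
  have hkey : c * (1/2*s^2) = 2*η*(s^2 - s*(s/σ)) - (s + s/σ)^2/(1-δ) := by
    rw [hc, hD, ← hσsq]
    have hσne : σ ≠ 0 := ne_of_gt hσ0
    have h1δne : (1-δ) ≠ 0 := ne_of_gt h1δ
    have hσ1ne : σ + 1 ≠ 0 := by positivity
    field_simp
  linarith [hAM, hTU, hWub2, h2ηP, hkey]
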